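/- arXiv:0801.0270 — 3 statements merged into one kernel-verified Lean document; each statement's English description precedes it below -/
import Mathlib

section
/- For every n ≥ 3 there exists an edge-coloring of the complete bipartite graph K(n,n) with 3 colors in which every vertex has color degree 3 and such that the vertex set of K(n,n) cannot be partitioned into fewer than 3 vertex-disjoint monochromatic trees. -/
/-!
Common definitions for edge-colored complete bipartite graphs.

The complete bipartite graph `K(A,B)` with partite sets `α` and `β` is modeled on the
vertex type `α ⊕ β`; an edge-coloring with color type `γ` is a function `c : α → β → γ`
(giving the color of the edge between `a : α` and `b : β`).
-/

/-- The spanning subgraph of the complete bipartite graph on parts `α`, `β` consisting of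
the edges of color `k`, under the edge-coloring `c`. -/
def biColorGraph {α β γ : Type*} (c : α → β → γ) (k : γ) : SimpleGraph (α ⊕ β) where
  Adj x y := (∃ a b, x = Sum.inl a ∧ y = Sum.inr b ∧ c a b = k) ∨
             (∃ a b, x = Sum.inr b ∧ y = Sum.inl a ∧ c a b = k)
  symm := by
    constructor
    rintro x y (⟨a, b, hx, hy, hc⟩ | ⟨a, b, hx, hy, hc⟩)
    · exact Or.inr ⟨a, b, hy, hx, hc⟩
    · exact Or.inl ⟨a, b, hy, hx, hc⟩
  loopless := by
    constructor
    rintro x (⟨a, b, hx, hy, _⟩ | ⟨a, b, hx, hy, _⟩) <;> subst hx <;> simp at hy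

/-- `S` is the vertex set of a monochromatic tree: it induces a connected subgraph in some
color class.  (A single vertex also counts as a monochromatic tree.) -/
def IsMonoTreeSet {α β γ : Type*} (c : α → β → γ) (S : Set (α ⊕ β)) : Prop :=
  ∃ k, ((biColorGraph c k).induce S).Connected

/-- `P` is a partition of the vertex set of the complete bipartite graph into
(nonempty, pairwise vertex-disjoint) vertex sets of monochromatic trees. -/
def IsMonoTreePartition {α β γ : Type*} (c : α → β → γ) (P : Finset (Set (α ⊕ β))) : Prop :=
  (∀ S ∈ P, IsMonoTreeSet c S) ∧ ∀ x : α ⊕ β, ∃! S, S ∈ P ∧ x ∈ S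

/-- The vertex set can be partitioned into at most `m` vertex-disjoint monochromatic trees. -/
def HasMonoTreePartition {α β γ : Type*} (c : α → β → γ) (m : ℕ) : Prop :=
  ∃ P : Finset (Set (α ⊕ β)), IsMonoTreePartition c P ∧ P.card ≤ m

/-- Every vertex has color degree 3, i.e. all three colors appear on its incident edges. -/
def ColorDegreeThree {α β : Type*} (c : α → β → Fin 3) : Prop :=
  (∀ (a : α) (k : Fin 3), ∃ b, c a b = k) ∧ ∀ (b : β) (k : Fin 3), ∃ a, c a b = k

/-! For 2-edge-colorings we use `Bool` as the color type: `true` = blue, `false` = green. -/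

/-- The vertices of `α` all of whose incident edges are blue. -/
def XA {α β : Type*} (c : α → β → Bool) : Set α := {a | ∀ b, c a b = true}

/-- The vertices of `α` all of whose incident edges are green. -/
def YA {α β : Type*} (c : α → β → Bool) : Set α := {a | ∀ b, c a b = false}

/-- The vertices of `β` all of whose incident edges are blue. -/
def XB {α β : Type*} (c : α → β → Bool) : Set β := {b | ∀ a, c a b = true}

/-- The vertices of `β` all of whose incident edges are green. -/
def YB {α β : Type*} (c : α → β → Bool) : Set β := {b | ∀ a, c a b = false}

/-- `S`-type graph: `X(G) ≠ ∅` and `Y(G) ≠ ∅`. -/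
def IsSType {α β : Type*} (c : α → β → Bool) : Prop :=
  ((XA c).Nonempty ∨ (XB c).Nonempty) ∧ ((YA c).Nonempty ∨ (YB c).Nonempty)

/-- `M`-type graph: there are partitions `A = A1 ∪ A1ᶜ`, `B = B1 ∪ B1ᶜ` with all four parts
nonempty such that `K(A1,B1)` and `K(A1ᶜ,B1ᶜ)` are blue and `K(A1,B1ᶜ)`, `K(A1ᶜ,B1)`
are green. -/
def IsMType {α β : Type*} (c : α → β → Bool) : Prop :=
  ∃ (A1 : Set α) (B1 : Set β),
    A1.Nonempty ∧ A1ᶜ.Nonempty ∧ B1.Nonempty ∧ B1ᶜ.Nonempty ∧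
    (∀ a ∈ A1, ∀ b ∈ B1, c a b = true) ∧
    (∀ a ∈ A1ᶜ, ∀ b ∈ B1ᶜ, c a b = true) ∧
    (∀ a ∈ A1, ∀ b ∈ B1ᶜ, c a b = false) ∧
    (∀ a ∈ A1ᶜ, ∀ b ∈ B1, c a b = false)

/-- For a subset `Bi ⊆ B`, the set `b(Bi) ⊆ A` of vertices sending blue edges to all of `Bi`
and green edges to all of `Biᶜ`.  (Thus `b(B̄i) = bsetA c Biᶜ`.) -/
def bsetA {α β : Type*} (c : α → β → Bool) (Bi : Set β) : Set α :=
  {a | (∀ b ∈ Bi, c a b = true) ∧ ∀ b ∈ Biᶜ, c a b = false}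

/-- For a subset `Ai ⊆ A`, the set `b(Ai) ⊆ B` of vertices sending blue edges to all of `Ai`
and green edges to all of `Aiᶜ`. -/
def bsetB {α β : Type*} (c : α → β → Bool) (Ai : Set α) : Set β :=
  {b | (∀ a ∈ Ai, c a b = true) ∧ ∀ a ∈ Aiᶜ, c a b = false}

/-- `S1*`-type graph with `X(G) ∪ Y(G) ⊆ A`: `|B| = 1`, `|A1| ≥ 2` and `|A3| ≥ 2`
(where `A1 = X(G)`, `A3 = Y(G)`). -/
def IsS1StarA {α β : Type*} [Fintype β] (c : α → β → Bool) : Prop :=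
  Fintype.card β = 1 ∧ 2 ≤ (XA c).ncard ∧ 2 ≤ (YA c).ncard

/-- `S1'`-type graph with `X(G) ∪ Y(G) ⊆ A`: `|A1| ≥ 2`, `|A3| ≥ 2`, `|B| ≥ 2`, and for
every partition `B = Bi ∪ B̄i` into nonempty parts, `b(Bi) ≠ ∅` and `b(B̄i) ≠ ∅`. -/
def IsS1PrimeA {α β : Type*} [Fintype β] (c : α → β → Bool) : Prop :=
  2 ≤ (XA c).ncard ∧ 2 ≤ (YA c).ncard ∧ 2 ≤ Fintype.card β ∧
  ∀ Bi : Set β, Bi.Nonempty → Biᶜ.Nonempty →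
    (bsetA c Bi).Nonempty ∧ (bsetA c Biᶜ).Nonempty

/-- `S1*`-type graph with `X(G) ∪ Y(G) ⊆ B`. -/
def IsS1StarB {α β : Type*} [Fintype α] (c : α → β → Bool) : Prop :=
  Fintype.card α = 1 ∧ 2 ≤ (XB c).ncard ∧ 2 ≤ (YB c).ncard

/-- `S1'`-type graph with `X(G) ∪ Y(G) ⊆ B`. -/
def IsS1PrimeB {α β : Type*} [Fintype α] (c : α → β → Bool) : Prop :=
  2 ≤ (XB c).ncard ∧ 2 ≤ (YB c).ncard ∧ 2 ≤ Fintype.card α ∧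
  ∀ Ai : Set α, Ai.Nonempty → Aiᶜ.Nonempty →
    (bsetB c Ai).Nonempty ∧ (bsetB c Aiᶜ).Nonempty

/-- `S1`-type graph: `S1*`-type or `S1'`-type. -/
def IsS1 {α β : Type*} [Fintype α] [Fintype β] (c : α → β → Bool) : Prop :=
  IsS1StarA c ∨ IsS1PrimeA c ∨ IsS1StarB c ∨ IsS1PrimeB c

/-- `S2`-type graph: an `S`-type graph that is not `S1`-type. -/
def IsS2 {α β : Type*} [Fintype α] [Fintype β] (c : α → β → Bool) : Prop :=
  IsSType c ∧ ¬ IsS1 c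

/-!
Color the edge `ab` of `K(n,n)` by `a + b (mod 3)`. In color `k` an edge joins `a` to `b`
only when `b ≡ k - a`, so the labeling `a ↦ a`, `b ↦ k - b` is constant on every
monochromatic tree; since the `A`-side label does not depend on `k`, the vertices `0, 1, 2`
of `A` lie in three different trees of any partition.
-/

theorem SimpleGraph.Connected.apply_eq_of_induce {V W : Type*} {G : SimpleGraph V} {S : Set V}
    (hS : (G.induce S).Connected) {φ : V → W} (hφ : ∀ x y, G.Adj x y → φ x = φ y)
    {x y : V} (hx : x ∈ S) (hy : y ∈ S) : φ x = φ y := by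
  have hxy : G.Reachable x y := (hS.preconnected ⟨x, hx⟩ ⟨y, hy⟩).map (Embedding.induce S).toHom
  rw [reachable_iff_reflTransGen] at hxy
  simpa [Relation.reflTransGen_eq_self] using hxy.lift φ hφ

theorem IsMonoTreePartition.card_le {α β γ ι : Type*} [Fintype ι] {c : α → β → γ}
    {P : Finset (Set (α ⊕ β))} (hP : IsMonoTreePartition c P) (v : ι → α ⊕ β)
    (hv : ∀ S, IsMonoTreeSet c S → ∀ i j, v i ∈ S → v j ∈ S → i = j) :
    Fintype.card ι ≤ P.card := by
  choose part hpart using fun i => (hP.2 (v i)).exists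
  have hinj : Function.Injective fun i => (⟨part i, (hpart i).1⟩ : P) := by
    intro i j hij
    simp only [Subtype.mk.injEq] at hij
    exact hv _ (hP.1 _ (hpart i).1) i j (hpart i).2 (hij ▸ (hpart j).2)
  simpa using Fintype.card_le_of_injective _ hinj

theorem colorDegreeThree_add {α β : Type*} {f : α → Fin 3} {g : β → Fin 3} (hf : f.Surjective)
    (hg : g.Surjective) : ColorDegreeThree fun a b => f a + g b := by
  refine ⟨fun a k => ?_, fun b k => ?_⟩
  · obtain ⟨b, hb⟩ := hg (k - f a)
    exact ⟨b, show f a + g b = k by rw [hb, add_sub_cancel]⟩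
  · obtain ⟨a, ha⟩ := hf (k - g b)
    exact ⟨a, show f a + g b = k by rw [ha, sub_add_cancel]⟩

section AddColoring

variable {α β G : Type*} [AddGroup G] {f : α → G} {g : β → G}

def addColoringLabel (f : α → G) (g : β → G) (k : G) : α ⊕ β → G :=
  Sum.elim f fun b => k - g b

theorem addColoringLabel_eq_of_adj {k : G} {x y : α ⊕ β}
    (h : (biColorGraph (fun a b => f a + g b) k).Adj x y) :
    addColoringLabel f g k x = addColoringLabel f g k y := by
  rcases h with ⟨a, b, rfl, rfl, hab⟩ | ⟨a, b, rfl, rfl, hab⟩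
  · exact eq_sub_of_add_eq hab
  · exact (eq_sub_of_add_eq hab).symm

theorem IsMonoTreeSet.eq_of_inl_mem {S : Set (α ⊕ β)}
    (hS : IsMonoTreeSet (fun a b => f a + g b) S) {a a' : α} (ha : Sum.inl a ∈ S)
    (ha' : Sum.inl a' ∈ S) : f a = f a' := by
  obtain ⟨k, hk⟩ := hS
  exact hk.apply_eq_of_induce (fun _ _ => addColoringLabel_eq_of_adj) ha ha'

theorem IsMonoTreePartition.card_le_of_add [Fintype G] (hf : f.Surjective)
    {P : Finset (Set (α ⊕ β))} (hP : IsMonoTreePartition (fun a b => f a + g b) P) :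
    Fintype.card G ≤ P.card :=
  hP.card_le (fun k => Sum.inl (Function.surjInv hf k)) fun _ hS i j hi hj => by
    simpa [Function.surjInv_eq hf] using hS.eq_of_inl_mem hi hj

end AddColoring

theorem Fin.ofNat_val_surjective {m n : ℕ} [NeZero m] (h : m ≤ n) :
    Function.Surjective fun a : Fin n => Fin.ofNat m a.val :=
  fun k => ⟨Fin.castLE h k, Fin.ext (by simp)⟩

/-- For every `n ≥ 3` there is a 3-edge-coloring of `K(n,n)` in which every
vertex has color degree 3 and whose vertex set cannot be partitioned into fewer than 3
vertex-disjoint monochromatic trees. -/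
theorem exists_three_colored_Knn_needing_three_trees (n : ℕ) (hn : 3 ≤ n) :
    ∃ c : Fin n → Fin n → Fin 3, ColorDegreeThree c ∧ ¬ HasMonoTreePartition c 2 := by
  have hsurj := Fin.ofNat_val_surjective (m := 3) hn
  refine ⟨fun a b => Fin.ofNat 3 a.val + Fin.ofNat 3 b.val, colorDegreeThree_add hsurj hsurj, ?_⟩
  rintro ⟨P, hP, hcard⟩
  have := hP.card_le_of_add hsurj
  simp only [Fintype.card_fin] at this
  omega
end

section
/- Let K(m,n) be a complete bipartite graph whose edges are colored with two colors, blue and green. Then K(m,n) has a monochromatic spanning tree if and only if K(m,n) is neither an S-type graph nor an M-type graph. -/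
/-!
A connected colour class has no isolated vertex, while an `S`-type graph has, in each colour, a
vertex none of whose edges has that colour. In an `M`-type graph every edge of either colour stays
inside one of two proper vertex sets (`A1 ∪ B1` and `A1ᶜ ∪ B1ᶜ` for blue, `A1 ∪ B1ᶜ` and
`A1ᶜ ∪ B1` for green), so neither colour class is connected.

Conversely, suppose every vertex has an edge of colour `k` but the colour-`k` graph is
disconnected, and let `A1 ∪ B1` be the colour-`k` component of some vertex. All edges between
`A1 ∪ B1` and its complement have the other colour, and, since no vertex is isolated in colour `k`,
the four sets `A1`, `A1ᶜ`, `B1`, `B1ᶜ` are nonempty. These cross edges form the two complete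
bipartite graphs on `A1 ∪ B1ᶜ` and on `A1ᶜ ∪ B1`, and any further edge of the other colour joins
them. So if the other colour class is disconnected as well, all remaining edges have colour `k`,
which is the `M`-type pattern.
-/

open SimpleGraph

section

variable {α β : Type*} {c : α → β → Bool} {k : Bool}

def sumSet (A' : Set α) (B' : Set β) : Set (α ⊕ β) := {v | Sum.elim (· ∈ A') (· ∈ B') v}

@[simp]
lemma inl_mem_sumSet {A' : Set α} {B' : Set β} {a : α} : Sum.inl a ∈ sumSet A' B' ↔ a ∈ A' :=
  Iff.rfl

@[simp]
lemma inr_mem_sumSet {A' : Set α} {B' : Set β} {b : β} : Sum.inr b ∈ sumSet A' B' ↔ b ∈ B' :=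
  Iff.rfl

@[simp]
lemma biColorGraph_adj_inl_inr {a : α} {b : β} :
    (biColorGraph c k).Adj (Sum.inl a) (Sum.inr b) ↔ c a b = k := by
  simp [biColorGraph]

@[simp]
lemma biColorGraph_adj_inr_inl {a : α} {b : β} :
    (biColorGraph c k).Adj (Sum.inr b) (Sum.inl a) ↔ c a b = k := by
  simp [biColorGraph]

@[simp]
lemma biColorGraph_not_adj_inl_inl {a a' : α} :
    ¬ (biColorGraph c k).Adj (Sum.inl a) (Sum.inl a') := by
  simp [biColorGraph]

@[simp]
lemma biColorGraph_not_adj_inr_inr {b b' : β} :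
    ¬ (biColorGraph c k).Adj (Sum.inr b) (Sum.inr b') := by
  simp [biColorGraph]

lemma mem_sumSet_iff_of_adj {A1 : Set α} {B1 : Set β}
    (h : ∀ a b, c a b = k → (a ∈ A1 ↔ b ∈ B1)) {x y : α ⊕ β}
    (hxy : (biColorGraph c k).Adj x y) :
    x ∈ sumSet A1 B1 ↔ y ∈ sumSet A1 B1 := by
  cases x <;> cases y <;> simp only [biColorGraph_adj_inl_inr, biColorGraph_adj_inr_inl,
    biColorGraph_not_adj_inl_inl, biColorGraph_not_adj_inr_inr] at hxy
  · simpa using h _ _ hxy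
  · simpa using (h _ _ hxy).symm

lemma not_connected_biColorGraph_of_edges_within {A1 : Set α} {B1 : Set β}
    (h : ∀ a b, c a b = k → (a ∈ A1 ↔ b ∈ B1)) {a a' : α} (ha : a ∈ A1) (ha' : a' ∉ A1) :
    ¬ (biColorGraph c k).Connected := by
  intro hconn
  obtain ⟨p⟩ := hconn.preconnected (Sum.inl a) (Sum.inl a')
  obtain ⟨d, -, hd, hd'⟩ := p.exists_boundary_dart (sumSet A1 B1) ha ha'
  exact hd' ((mem_sumSet_iff_of_adj h d.adj).mp hd)

lemma reachable_of_mem_sumSet {A' : Set α} {B' : Set β} {a' : α} {b' : β} (ha' : a' ∈ A')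
    (hb' : b' ∈ B') (h : ∀ a ∈ A', ∀ b ∈ B', c a b = k) :
    ∀ x ∈ sumSet A' B', (biColorGraph c k).Reachable (Sum.inl a') x
  | Sum.inl a, ha => (biColorGraph_adj_inl_inr.2 (h a' ha' b' hb')).reachable.trans
      (biColorGraph_adj_inr_inl.2 (h a ha b' hb')).reachable
  | Sum.inr b, hb => (biColorGraph_adj_inl_inr.2 (h a' ha' b hb)).reachable

lemma connected_biColorGraph_of_cross_complete {A1 : Set α} {B1 : Set β} {a1 a2 : α}
    {b1 b2 : β} (ha1 : a1 ∈ A1) (ha2 : a2 ∉ A1) (hb1 : b1 ∈ B1) (hb2 : b2 ∉ B1)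
    (hcross : ∀ a b, (a ∈ A1 ↔ b ∉ B1) → c a b = k)
    {a : α} {b : β} (hab : c a b = k) (hin : a ∈ A1 ↔ b ∈ B1) :
    (biColorGraph c k).Connected := by
  have hP := reachable_of_mem_sumSet (c := c) (B' := B1ᶜ) ha1 hb2
    fun a ha b hb => hcross a b (by simp_all)
  have hQ := reachable_of_mem_sumSet (c := c) (A' := A1ᶜ) ha2 hb1
    fun a ha b hb => hcross a b (by simp_all)
  have hbridge : (biColorGraph c k).Reachable (Sum.inl a1) (Sum.inl a2) := by
    have hedge := (biColorGraph_adj_inl_inr.2 hab).reachable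
    by_cases ha : a ∈ A1
    · exact ((hP _ (by simpa)).trans hedge).trans (hQ _ (by simpa [← hin])).symm
    · exact ((hP _ (by simpa [← hin])).trans hedge.symm).trans (hQ _ (by simpa)).symm
  refine (connected_iff_exists_forall_reachable _).2 ⟨Sum.inl a1, fun x => ?_⟩
  by_cases hx : x ∈ sumSet A1 B1ᶜ
  · exact hP x hx
  · refine hbridge.trans (hQ x ?_)
    cases x <;> simp_all

theorem isMType_iff_true : IsMType c ↔
    ∃ (A1 : Set α) (B1 : Set β), A1.Nonempty ∧ A1ᶜ.Nonempty ∧ B1.Nonempty ∧ B1ᶜ.Nonempty ∧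
      ∀ a b, c a b = true ↔ (a ∈ A1 ↔ b ∈ B1) := by
  constructor
  · rintro ⟨A1, B1, hA, hA', hB, hB', h11, h22, h12, h21⟩
    refine ⟨A1, B1, hA, hA', hB, hB', fun a b => ?_⟩
    by_cases ha : a ∈ A1 <;> by_cases hb : b ∈ B1
    · simp [h11 a ha b hb, ha, hb]
    · simp [h12 a ha b hb, ha, hb]
    · simp [h21 a ha b hb, ha, hb]
    · simp [h22 a ha b hb, ha, hb]
  · rintro ⟨A1, B1, hA, hA', hB, hB', h⟩
    exact ⟨A1, B1, hA, hA', hB, hB', fun a ha b hb => (h a b).2 (by simp [ha, hb]),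
      fun a ha b hb => (h a b).2 (by simp_all),
      fun a ha b hb => Bool.eq_false_iff.2 fun hab => hb (((h a b).1 hab).1 ha),
      fun a ha b hb => Bool.eq_false_iff.2 fun hab => ha (((h a b).1 hab).2 hb)⟩

theorem isMType_iff (k : Bool) : IsMType c ↔
    ∃ (A1 : Set α) (B1 : Set β), A1.Nonempty ∧ A1ᶜ.Nonempty ∧ B1.Nonempty ∧ B1ᶜ.Nonempty ∧
      ∀ a b, c a b = k ↔ (a ∈ A1 ↔ b ∈ B1) := by
  rw [isMType_iff_true]
  cases k
  · constructor
    · rintro ⟨A1, B1, hA, hA', hB, hB', h⟩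
      refine ⟨A1, B1ᶜ, hA, hA', hB', by simpa using hB, fun a b => ?_⟩
      rw [← Bool.not_eq_true, h]
      tauto
    · rintro ⟨A1, B1, hA, hA', hB, hB', h⟩
      refine ⟨A1, B1ᶜ, hA, hA', hB', by simpa using hB, fun a b => ?_⟩
      rw [← Bool.not_eq_false, h]
      tauto
  · rfl

theorem isSType_iff : IsSType c ↔ ∀ k, (∃ a, ∀ b, c a b ≠ k) ∨ ∃ b, ∀ a, c a b ≠ k := by
  simp [IsSType, XA, XB, YA, YB, Set.Nonempty]

theorem IsMType.not_connected (hM : IsMType c) (k : Bool) :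
    ¬ (biColorGraph c k).Connected := by
  obtain ⟨A1, B1, ⟨a, ha⟩, ⟨a', ha'⟩, -, -, h⟩ := (isMType_iff k).1 hM
  exact not_connected_biColorGraph_of_edges_within (fun a b => (h a b).1) ha ha'

theorem IsSType.not_connected [Nonempty α] [Nonempty β] (hS : IsSType c) (k : Bool) :
    ¬ (biColorGraph c k).Connected := by
  intro hconn
  have : Nontrivial (α ⊕ β) :=
    nontrivial_of_ne (Sum.inl (Classical.arbitrary α)) (Sum.inr (Classical.arbitrary β))
      Sum.inl_ne_inr
  rcases isSType_iff.1 hS k with ⟨a, ha⟩ | ⟨b, hb⟩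
  · obtain ⟨_ | b, hab⟩ := hconn.preconnected.exists_adj_of_nontrivial (Sum.inl a)
    · simp at hab
    · exact ha b (biColorGraph_adj_inl_inr.1 hab)
  · obtain ⟨a | _, hab⟩ := hconn.preconnected.exists_adj_of_nontrivial (Sum.inr b)
    · exact hb a (biColorGraph_adj_inr_inl.1 hab)
    · simp at hab

theorem isMType_of_not_connected [Nonempty α] (hA : ∀ a, ∃ b, c a b = k)
    (hB : ∀ b, ∃ a, c a b = k) (hk : ¬ (biColorGraph c k).Connected)
    (hk' : ¬ (biColorGraph c (!k)).Connected) : IsMType c := by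
  obtain ⟨a0⟩ := ‹Nonempty α›
  let A1 : Set α := {a | (biColorGraph c k).Reachable (Sum.inl a0) (Sum.inl a)}
  let B1 : Set β := {b | (biColorGraph c k).Reachable (Sum.inl a0) (Sum.inr b)}
  have hwithin : ∀ a b, c a b = k → (a ∈ A1 ↔ b ∈ B1) := fun a b hab =>
    ⟨fun ha => ha.trans (biColorGraph_adj_inl_inr.2 hab).reachable,
      fun hb => hb.trans (biColorGraph_adj_inr_inl.2 hab).reachable⟩
  have hcross : ∀ a b, (a ∈ A1 ↔ b ∉ B1) → c a b = !k := fun a b h =>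
    Bool.eq_not_iff.2 fun hab => by have := hwithin a b hab; tauto
  have ha0 : a0 ∈ A1 := Reachable.refl _
  obtain ⟨a1, ha1⟩ : ∃ a, a ∉ A1 := by
    by_contra! hall
    refine hk ((connected_iff_exists_forall_reachable _).2 ⟨Sum.inl a0, ?_⟩)
    rintro (a | b)
    · exact hall a
    · obtain ⟨a, hab⟩ := hB b
      exact (hwithin a b hab).1 (hall a)
  obtain ⟨b0, hb0⟩ := hA a0
  obtain ⟨b1, hb1⟩ := hA a1
  have hb0 : b0 ∈ B1 := (hwithin a0 b0 hb0).1 ha0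
  have hb1 : b1 ∉ B1 := fun hb => ha1 ((hwithin a1 b1 hb1).2 hb)
  refine (isMType_iff k).2 ⟨A1, B1, ⟨a0, ha0⟩, ⟨a1, ha1⟩, ⟨b0, hb0⟩, ⟨b1, hb1⟩,
    fun a b => ⟨hwithin a b, fun hin => ?_⟩⟩
  by_contra hab
  exact hk' (connected_biColorGraph_of_cross_complete ha0 ha1 hb0 hb1 hcross
    (Bool.eq_not_iff.2 hab) hin)

end

theorem mono_spanning_tree_iff_not_S_not_M_general {α β : Type*}
    [Nonempty α] [Nonempty β] (c : α → β → Bool) :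
    (∃ k, (biColorGraph c k).Connected) ↔ ¬ IsSType c ∧ ¬ IsMType c := by
  refine ⟨fun ⟨k, hk⟩ => ⟨fun hS => hS.not_connected k hk, fun hM => hM.not_connected k hk⟩, ?_⟩
  rintro ⟨hS, hM⟩
  obtain ⟨k, hk⟩ := not_forall.1 (mt isSType_iff.2 hS)
  push Not at hk
  by_contra! hconn
  exact hM (isMType_of_not_connected hk.1 hk.2 (hconn k) (hconn !k))

/-- **Lemma 1.** A 2-edge-colored complete bipartite graph has a monochromatic
spanning tree if and only if it is neither an `S`-type graph nor an `M`-type graph. -/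
theorem mono_spanning_tree_iff_not_S_not_M {α β : Type*} [Fintype α] [Fintype β]
    [Nonempty α] [Nonempty β] (c : α → β → Bool) :
    (∃ k, (biColorGraph c k).Connected) ↔ ¬ IsSType c ∧ ¬ IsMType c :=
  mono_spanning_tree_iff_not_S_not_M_general c
end

section
/- Let K(A,B) be a complete bipartite graph whose edges are colored with two colors, blue and green. If K(A,B) is an S2-type graph, then the vertex set of K(A,B) can be partitioned into either an isolated vertex together with one monochromatic tree, or two vertex-disjoint monochromatic trees of different colors. Moreover, writing A = A1 ∪ A2 ∪ A3 (respectively B = B1 ∪ B2 ∪ B3) for the partite set containing X(G) ∪ Y(G), except in the case min{|A1|,|A3|} = 1 (respectively min{|B1|,|B3|} = 1), the vertex set of K(A,B) can always be partitioned into two vertex-disjoint monochromatic trees of different colors. -/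
/-!
By transposing the coloring we may assume `X(G) ∪ Y(G) ⊆ A`; fix `x ∈ X(G)` and `y ∈ Y(G)`.
A vertex set containing `x` in which every `A`-vertex has a blue edge into the set is
blue-connected through the star at `x`, and likewise for `y` and green.

If `A1 = {x}`, every other `A`-vertex has a green edge, so all vertices but `x` form a green tree;
symmetrically if `A3 = {y}`. Otherwise `|A1|, |A3| ≥ 2`; not being `S1*` forces `|B| ≥ 2`, and not
being `S1'` gives a partition `B = Bi ∪ B̄i` with `b(Bi) = ∅`. Let `S` consist of `B̄i` and the
`A`-vertices with a blue edge into `B̄i`: it is blue-connected through `x`, and its complement is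
green-connected through `y`, since an `A`-vertex outside `S` is green on `B̄i` and, not lying in
`b(Bi)`, has a green edge into `Bi`.
-/

namespace biColorGraph

variable {α β γ : Type*} {c : α → β → γ} {k : γ}

@[simp]
lemma adj_inl_inr {a : α} {b : β} : (biColorGraph c k).Adj (.inl a) (.inr b) ↔ c a b = k := by
  simp [biColorGraph]

@[simp]
lemma adj_inr_inl {a : α} {b : β} : (biColorGraph c k).Adj (.inr b) (.inl a) ↔ c a b = k := by
  simp [biColorGraph]

def swapIso (c : α → β → γ) (k : γ) : biColorGraph (Function.swap c) k ≃g biColorGraph c k where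
  toEquiv := Equiv.sumComm β α
  map_rel_iff' {u v} := by
    rcases u with b | a <;> rcases v with b' | a' <;> simp [biColorGraph]

lemma connected_induce_swap_iff {S : Set (β ⊕ α)} :
    ((biColorGraph (Function.swap c) k).induce S).Connected ↔
      ((biColorGraph c k).induce (Sum.swap ⁻¹' S)).Connected :=
  ((swapIso c k).symm.induce (Equiv.sumComm α β).bijective.bijOn_preimage).connected_iff.symm

lemma connected_induce_of_hub {y : α} (hy : ∀ b, c y b = k) {S : Set (α ⊕ β)}
    (hyS : .inl y ∈ S) (hS : ∀ a, .inl a ∈ S → ∃ b, .inr b ∈ S ∧ c a b = k) :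
    ((biColorGraph c k).induce S).Connected := by
  rw [SimpleGraph.connected_iff_exists_forall_reachable]
  refine ⟨⟨_, hyS⟩, ?_⟩
  have reach_inr (b : β) (hb : .inr b ∈ S) :
      ((biColorGraph c k).induce S).Reachable ⟨_, hyS⟩ ⟨_, hb⟩ :=
    SimpleGraph.Adj.reachable (G := (biColorGraph c k).induce S) (u := ⟨_, hyS⟩)
      (v := ⟨.inr b, hb⟩) (adj_inl_inr.mpr (hy b))
  rintro ⟨a | b, hv⟩
  · obtain ⟨b, hb, hab⟩ := hS a hv
    exact (reach_inr b hb).trans (SimpleGraph.Adj.reachable (adj_inr_inl.mpr hab))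
  · exact reach_inr b hv

lemma connected_induce_compl_singleton {x y : α} (hy : ∀ b, c y b = k) (hyx : y ≠ x)
    (hx : ∀ a ≠ x, ∃ b, c a b = k) :
    ((biColorGraph c k).induce {.inl x}ᶜ).Connected :=
  connected_induce_of_hub hy (by simpa using hyx) fun a ha ↦
    (hx a (by simpa using ha)).imp fun _ hb ↦ ⟨by simp, hb⟩

end biColorGraph

section TwoColorings

variable {α β : Type*}

def HasTwoColorTreePartition (c : α → β → Bool) : Prop :=
  ∃ S : Set (α ⊕ β), ((biColorGraph c true).induce S).Connected ∧
    ((biColorGraph c false).induce Sᶜ).Connected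

def HasVertexAndTreePartition (c : α → β → Bool) : Prop :=
  ∃ (v : α ⊕ β) (k : Bool), ((biColorGraph c k).induce {v}ᶜ).Connected

lemma HasTwoColorTreePartition.of_swap {c : α → β → Bool}
    (h : HasTwoColorTreePartition (Function.swap c)) : HasTwoColorTreePartition c := by
  obtain ⟨S, hS, hSc⟩ := h
  rw [biColorGraph.connected_induce_swap_iff] at hS hSc
  exact ⟨Sum.swap ⁻¹' S, hS, hSc⟩

lemma HasVertexAndTreePartition.of_swap {c : α → β → Bool}
    (h : HasVertexAndTreePartition (Function.swap c)) : HasVertexAndTreePartition c := by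
  obtain ⟨v, k, hv⟩ := h
  refine ⟨v.swap, k, ?_⟩
  have hpre : Sum.swap ⁻¹' {v} = {v.swap} := by
    ext w
    constructor <;> rintro rfl <;> simp
  rwa [biColorGraph.connected_induce_swap_iff, Set.preimage_compl, hpre] at hv

lemma IsSType.nonempty_XA_YA_or_nonempty_XB_YB {c : α → β → Bool} (h : IsSType c) :
    ((XA c).Nonempty ∧ (YA c).Nonempty) ∨ ((XB c).Nonempty ∧ (YB c).Nonempty) := by
  obtain ⟨⟨x, hx⟩ | ⟨x, hx⟩, ⟨y, hy⟩ | ⟨y, hy⟩⟩ := h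
  · exact .inl ⟨⟨x, hx⟩, ⟨y, hy⟩⟩
  · exact absurd (hy x) (by simp [hx y])
  · exact absurd (hy x) (by simp [hx y])
  · exact .inr ⟨⟨x, hx⟩, ⟨y, hy⟩⟩

lemma hasTwoColorTreePartition_of_not_nonempty_bsetA {c : α → β → Bool} (hX : (XA c).Nonempty)
    (hY : (YA c).Nonempty) {Bi : Set β} (hBi : Biᶜ.Nonempty) (hb : ¬ (bsetA c Bi).Nonempty) :
    HasTwoColorTreePartition c := by
  obtain ⟨x, hx⟩ := hX
  obtain ⟨y, hy⟩ := hY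
  obtain ⟨b₀, hb₀⟩ := hBi
  refine ⟨{v | Sum.elim (fun a ↦ ∃ b ∉ Bi, c a b = true) (· ∉ Bi) v},
    biColorGraph.connected_induce_of_hub hx ⟨b₀, hb₀, hx b₀⟩ fun a ⟨b, hb, hab⟩ ↦ ⟨b, hb, hab⟩,
    biColorGraph.connected_induce_of_hub hy ?_ fun a ha ↦ ?_⟩
  · simpa using fun b (_ : b ∉ Bi) ↦ hy b
  · have hgreen : ∀ b ∉ Bi, c a b = false := by simpa using ha
    have ha' : a ∉ bsetA c Bi := fun h ↦ hb ⟨a, h⟩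
    obtain ⟨b, hb, hab⟩ : ∃ b ∈ Bi, c a b = false := by
      by_contra! hblue
      exact ha' ⟨fun b hb ↦ by simpa using hblue b hb, hgreen⟩
    exact ⟨b, by simpa using hb, hab⟩

lemma hasTwoColorTreePartition_of_not_isS1PrimeA [Fintype β] {c : α → β → Bool}
    (hX : 2 ≤ (XA c).ncard) (hY : 2 ≤ (YA c).ncard) (hβ : 2 ≤ Fintype.card β)
    (h : ¬ IsS1PrimeA c) : HasTwoColorTreePartition c := by
  have hXne : (XA c).Nonempty := Set.nonempty_of_ncard_ne_zero (by omega)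
  have hYne : (YA c).Nonempty := Set.nonempty_of_ncard_ne_zero (by omega)
  obtain ⟨Bi, hBi, hBic, hb⟩ : ∃ Bi : Set β, Bi.Nonempty ∧ Biᶜ.Nonempty ∧
      ((bsetA c Bi).Nonempty → ¬ (bsetA c Biᶜ).Nonempty) := by
    simpa [IsS1PrimeA, hX, hY, hβ] using h
  by_cases hne : (bsetA c Bi).Nonempty
  · exact hasTwoColorTreePartition_of_not_nonempty_bsetA hXne hYne (by rwa [compl_compl]) (hb hne)
  · exact hasTwoColorTreePartition_of_not_nonempty_bsetA hXne hYne hBic hne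

lemma hasVertexAndTreePartition_of_min_ncard_eq_one [Nonempty β] {c : α → β → Bool}
    (hX : (XA c).Nonempty) (hY : (YA c).Nonempty) (h : min (XA c).ncard (YA c).ncard = 1) :
    HasVertexAndTreePartition c := by
  obtain ⟨x, hx⟩ := hX
  obtain ⟨y, hy⟩ := hY
  have hxy : x ≠ y := by
    rintro rfl
    obtain ⟨b⟩ := ‹Nonempty β›
    exact absurd (hy b) (by simp [hx b])
  rcases min_choice (XA c).ncard (YA c).ncard with hmin | hmin <;> rw [hmin] at h
  · obtain ⟨x₀, hx₀⟩ := Set.ncard_eq_one.mp h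
    obtain rfl : x = x₀ := by rwa [hx₀] at hx
    refine ⟨.inl x, false, biColorGraph.connected_induce_compl_singleton hy hxy.symm fun a ha ↦ ?_⟩
    have : a ∉ XA c := by simpa [hx₀] using ha
    simpa [XA] using this
  · obtain ⟨y₀, hy₀⟩ := Set.ncard_eq_one.mp h
    obtain rfl : y = y₀ := by rwa [hy₀] at hy
    refine ⟨.inl y, true, biColorGraph.connected_induce_compl_singleton hx hxy fun a ha ↦ ?_⟩
    have : a ∉ YA c := by simpa [hy₀] using ha
    simpa [YA] using this

lemma partition_of_nonempty_XA_YA [Finite α] [Fintype β] [Nonempty β] {c : α → β → Bool}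
    (hX : (XA c).Nonempty) (hY : (YA c).Nonempty) (hStar : ¬ IsS1StarA c)
    (hPrime : ¬ IsS1PrimeA c) :
    (HasVertexAndTreePartition c ∨ HasTwoColorTreePartition c) ∧
      (min (XA c).ncard (YA c).ncard ≠ 1 → HasTwoColorTreePartition c) := by
  by_cases hmin : min (XA c).ncard (YA c).ncard = 1
  · exact ⟨.inl (hasVertexAndTreePartition_of_min_ncard_eq_one hX hY hmin), absurd hmin⟩
  have hX1 := (Set.ncard_pos (Set.toFinite _)).mpr hX
  have hY1 := (Set.ncard_pos (Set.toFinite _)).mpr hY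
  have hX2 : 2 ≤ (XA c).ncard := by omega
  have hY2 : 2 ≤ (YA c).ncard := by omega
  have hβ : 2 ≤ Fintype.card β := by
    have : Fintype.card β ≠ 1 := fun h1 ↦ hStar ⟨h1, hX2, hY2⟩
    have := Fintype.card_pos (α := β)
    omega
  have two := hasTwoColorTreePartition_of_not_isS1PrimeA hX2 hY2 hβ hPrime
  exact ⟨.inr two, fun _ ↦ two⟩

end TwoColorings

/-- **Lemma 3.** If a 2-edge-colored complete bipartite graph is an `S2`-type
graph, then its vertex set can be partitioned into either an isolated vertex together with
one monochromatic tree, or into two vertex-disjoint monochromatic trees of different colors.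
Moreover, except in the case `min {|A1|, |A3|} = 1` (resp. `min {|B1|, |B3|} = 1`) for the
partite set containing `X(G) ∪ Y(G)`, the vertex set can always be partitioned into two
vertex-disjoint monochromatic trees of different colors. -/
theorem s2type_partition {α β : Type*} [Fintype α] [Fintype β] [Nonempty α] [Nonempty β]
    (c : α → β → Bool) (h : IsS2 c) :
    ((∃ (v : α ⊕ β) (k : Bool), ((biColorGraph c k).induce {v}ᶜ).Connected) ∨
      ∃ S : Set (α ⊕ β), ((biColorGraph c true).induce S).Connected ∧
        ((biColorGraph c false).induce Sᶜ).Connected) ∧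
    (min (XA c).ncard (YA c).ncard ≠ 1 → min (XB c).ncard (YB c).ncard ≠ 1 →
      ∃ S : Set (α ⊕ β), ((biColorGraph c true).induce S).Connected ∧
        ((biColorGraph c false).induce Sᶜ).Connected) := by
  obtain ⟨hS, hS1⟩ := h
  rcases hS.nonempty_XA_YA_or_nonempty_XB_YB with ⟨hX, hY⟩ | ⟨hX, hY⟩
  · obtain ⟨h₁, h₂⟩ := partition_of_nonempty_XA_YA hX hY (fun h ↦ hS1 (.inl h))
      (fun h ↦ hS1 (.inr (.inl h)))
    exact ⟨h₁, fun h _ ↦ h₂ h⟩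
  -- `XA (Function.swap c)` is `XB c` by definition, and likewise for `YA`, `IsS1StarA`, `IsS1PrimeA`.
  · obtain ⟨h₁, h₂⟩ := partition_of_nonempty_XA_YA (c := Function.swap c) hX hY
      (fun h ↦ hS1 (.inr (.inr (.inl h)))) (fun h ↦ hS1 (.inr (.inr (.inr h))))
    exact ⟨h₁.imp HasVertexAndTreePartition.of_swap HasTwoColorTreePartition.of_swap,
      fun _ h ↦ (h₂ h).of_swap⟩
end
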